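/- Let B ⊆ A be an entwined C-extension with bijective entwining map ψ and induced left coaction λ(a) = ψ⁻¹(a·ρ(1)) = a₍₋₁₎⊗a₍₀₎. Then for all a, ã ∈ A, ψ⁻¹(a·ã₍₀₎ ⊗ ã₍₁₎) = a₍₋₁₎ ⊗ a₍₀₎ã, where ρ(ã) = ã₍₀₎⊗ã₍₁₎. -/
import Mathlib


open TensorProduct LinearMap

noncomputable section

variable {k : Type*} [Field k]
variable {A : Type*} [Ring A] [Algebra k A]
variable {C : Type*} [AddCommGroup C] [Module k C] [Coalgebra k C]

/-- The map `(μ ⊗ C) ∘ (A ⊗ ψ)` on `(A ⊗ C) ⊗ A`, the right hand side of the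
entwining compatibility conditions. -/
def entRHS (ψ : C ⊗[k] A →ₗ[k] A ⊗[k] C) : (A ⊗[k] C) ⊗[k] A →ₗ[k] A ⊗[k] C :=
  rTensor C (mul' k A) ∘ₗ (TensorProduct.assoc k A A C).symm.toLinearMap ∘ₗ
    lTensor A ψ ∘ₗ (TensorProduct.assoc k A C A).toLinearMap

/-- A right-right entwining map `ψ : C ⊗ A → A ⊗ C`. -/
structure IsEntwining (ψ : C ⊗[k] A →ₗ[k] A ⊗[k] C) : Prop where
  mul_compat : ∀ (c : C) (a a' : A), ψ (c ⊗ₜ (a * a')) = entRHS ψ (ψ (c ⊗ₜ a) ⊗ₜ a')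
  one_compat : ∀ c : C, ψ (c ⊗ₜ 1) = (1 : A) ⊗ₜ c
  comul_compat : ∀ (c : C) (a : A),
    lTensor A (Coalgebra.comul (R := k)) (ψ (c ⊗ₜ a)) =
      (TensorProduct.assoc k A C C)
        (rTensor C ψ ((TensorProduct.assoc k C A C).symm
          (lTensor C ψ ((TensorProduct.assoc k C C A)
            ((Coalgebra.comul (R := k) c) ⊗ₜ a)))))
  counit_compat : ∀ (c : C) (a : A),
    (TensorProduct.rid k A) (lTensor A (Coalgebra.counit (R := k)) (ψ (c ⊗ₜ a))) =
      Coalgebra.counit (R := k) c • a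

/-- `ρ : A → A ⊗ C` is a right `C`-coaction. -/
structure IsRightCoaction (ρ : A →ₗ[k] A ⊗[k] C) : Prop where
  coassoc : ∀ a : A,
    (TensorProduct.assoc k A C C) (rTensor C ρ (ρ a)) =
      lTensor A (Coalgebra.comul (R := k)) (ρ a)
  counit_id : ∀ a : A,
    (TensorProduct.rid k A) (lTensor A (Coalgebra.counit (R := k)) (ρ a)) = a

/-- An entwined `C`-extension: a right `C`-comodule algebra structure on `A` given by a
bijective entwining map `ψ` (with inverse `ψinv`) and a coaction `ρ` satisfying
`ρ(a b) = a₍₀₎ ψ(a₍₁₎ ⊗ b)`. -/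
structure IsEntwinedExtension (ψ : C ⊗[k] A →ₗ[k] A ⊗[k] C)
    (ψinv : A ⊗[k] C →ₗ[k] C ⊗[k] A) (ρ : A →ₗ[k] A ⊗[k] C) : Prop where
  entwining : IsEntwining ψ
  coaction : IsRightCoaction ρ
  left_inv : ∀ x : C ⊗[k] A, ψinv (ψ x) = x
  right_inv : ∀ y : A ⊗[k] C, ψ (ψinv y) = y
  mul_coact : ∀ a b : A, ρ (a * b) = entRHS ψ (ρ a ⊗ₜ b)

/-- The induced left coaction `λ(a) = ψ⁻¹(a · ρ(1))`. -/
def leftCoact (ψinv : A ⊗[k] C →ₗ[k] C ⊗[k] A) (ρ : A →ₗ[k] A ⊗[k] C) :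
    A →ₗ[k] C ⊗[k] A :=
  ψinv ∘ₗ rTensor C (mul' k A) ∘ₗ (TensorProduct.assoc k A A C).symm.toLinearMap ∘ₗ
    (TensorProduct.mk k A (A ⊗[k] C)).flip (ρ 1)

/-- The lifted canonical map `κ : A ⊗ A → A ⊗ C`, `a ⊗ a' ↦ a · ρ(a')`. -/
def kappaMap (ρ : A →ₗ[k] A ⊗[k] C) : A ⊗[k] A →ₗ[k] A ⊗[k] C :=
  rTensor C (mul' k A) ∘ₗ (TensorProduct.assoc k A A C).symm.toLinearMap ∘ₗ lTensor A ρ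

/-- A cointegral on the coalgebra `C`: `δ(c₍₁₎ ⊗ c₍₂₎) = ε(c)` and
`c₍₁₎ δ(c₍₂₎ ⊗ c') = δ(c ⊗ c'₍₁₎) c'₍₂₎`. -/
def IsCointegral (δ : C ⊗[k] C →ₗ[k] k) : Prop :=
  (∀ c : C, δ (Coalgebra.comul (R := k) c) = Coalgebra.counit (R := k) c) ∧
  (∀ c c' : C,
    (TensorProduct.rid k C) (lTensor C δ ((TensorProduct.assoc k C C C)
      ((Coalgebra.comul (R := k) c) ⊗ₜ c'))) =
    (TensorProduct.lid k C) (rTensor C δ ((TensorProduct.assoc k C C C).symm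
      (c ⊗ₜ (Coalgebra.comul (R := k) c')))))

/-- `γ = (δ ⊗ A) ∘ (C ⊗ λ) : C ⊗ A → A`. -/
def gammaMap (δ : C ⊗[k] C →ₗ[k] k) (lam : A →ₗ[k] C ⊗[k] A) : C ⊗[k] A →ₗ[k] A :=
  (TensorProduct.lid k A).toLinearMap ∘ₗ rTensor A δ ∘ₗ
    (TensorProduct.assoc k C C A).symm.toLinearMap ∘ₗ lTensor C lam

/-- `α = (A ⊗ δ) ∘ (ρ ⊗ C) : A ⊗ C → A`. -/
def alphaMap (δ : C ⊗[k] C →ₗ[k] k) (ρ : A →ₗ[k] A ⊗[k] C) : A ⊗[k] C →ₗ[k] A :=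
  (TensorProduct.rid k A).toLinearMap ∘ₗ lTensor A δ ∘ₗ
    (TensorProduct.assoc k A C C).toLinearMap ∘ₗ rTensor C ρ

/-- `ℓ = (γ ⊗ α) ∘ (C ⊗ σ ⊗ C) ∘ (Δ ⊗ C) ∘ Δ : C → A ⊗ A`. -/
def ellMap (σ : C →ₗ[k] A ⊗[k] A) (γ : C ⊗[k] A →ₗ[k] A) (α : A ⊗[k] C →ₗ[k] A) :
    C →ₗ[k] A ⊗[k] A :=
  TensorProduct.map γ α ∘ₗ (TensorProduct.assoc k (C ⊗[k] A) A C).toLinearMap ∘ₗ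
    rTensor C (TensorProduct.assoc k C A A).symm.toLinearMap ∘ₗ
    rTensor C (lTensor C σ) ∘ₗ rTensor C (Coalgebra.comul (R := k)) ∘ₗ
    Coalgebra.comul (R := k)

lemma aux_mulLeft {k : Type*} [Field k] {A : Type*} [Ring A] [Algebra k A]
    {C : Type*} [AddCommGroup C] [Module k C] (a : A) (z : A ⊗[k] C) :
    rTensor C (mul' k A) ((TensorProduct.assoc k A A C).symm (a ⊗ₜ z)) =
      rTensor C (mulLeft k a) z := by
  induction z using TensorProduct.induction_on with
  | zero => simp
  | tmul a' c => simp [mul'_apply]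
  | add x y hx hy => simp [tmul_add, hx, hy]

lemma entRHS_tmul {k : Type*} [Field k] {A : Type*} [Ring A] [Algebra k A]
    {C : Type*} [AddCommGroup C] [Module k C] [Coalgebra k C]
    (ψ : C ⊗[k] A →ₗ[k] A ⊗[k] C) (a : A) (c : C) (b : A) :
    entRHS ψ ((a ⊗ₜ c) ⊗ₜ b) = rTensor C (mulLeft k a) (ψ (c ⊗ₜ b)) := by
  simp [entRHS, aux_mulLeft]

lemma key_lemma {k : Type*} [Field k] {A : Type*} [Ring A] [Algebra k A]
    {C : Type*} [AddCommGroup C] [Module k C] [Coalgebra k C]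
    (ψ : C ⊗[k] A →ₗ[k] A ⊗[k] C) (ψinv : A ⊗[k] C →ₗ[k] C ⊗[k] A)
    (hψ : IsEntwining ψ) (hli : ∀ x : C ⊗[k] A, ψinv (ψ x) = x)
    (x : C ⊗[k] A) (b : A) :
    ψinv (entRHS ψ (ψ x ⊗ₜ b)) = lTensor C (mulRight k b) x := by
  induction x using TensorProduct.induction_on with
  | zero => simp
  | tmul c a =>
    rw [← hψ.mul_compat, hli]
    simp [mulRight_apply]
  | add x y hx hy =>
    rw [map_add, add_tmul, map_add, map_add, hx, hy, map_add]

lemma commute_lemma {k : Type*} [Field k] {A : Type*} [Ring A] [Algebra k A]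
    {C : Type*} [AddCommGroup C] [Module k C] [Coalgebra k C]
    (ψ : C ⊗[k] A →ₗ[k] A ⊗[k] C) (a b : A) (y : A ⊗[k] C) :
    rTensor C (mulLeft k a) (entRHS ψ (y ⊗ₜ b)) =
      entRHS ψ (rTensor C (mulLeft k a) y ⊗ₜ b) := by
  induction y using TensorProduct.induction_on with
  | zero => simp
  | tmul a' c =>
    rw [entRHS_tmul]
    have : (rTensor C (mulLeft k a)) ((a' ⊗ₜ[k] c)) = (a * a') ⊗ₜ[k] c := by
      simp [mulLeft_apply]
    rw [this, entRHS_tmul, ← rTensor_comp_apply]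
    congr 1
    ext x
    simp [mul_assoc]
  | add x y hx hy => rw [add_tmul, map_add, map_add, hx, hy, map_add, add_tmul, map_add]

/-- In an entwined `C`-extension, `ψ⁻¹(a·b₍₀₎ ⊗ b₍₁₎) = a₍₋₁₎ ⊗ a₍₀₎b`, with the
induced left coaction `λ(a) = ψ⁻¹(a · ρ(1)) = a₍₋₁₎ ⊗ a₍₀₎`. -/
theorem psinv_mul_coact
    (ψ : C ⊗[k] A →ₗ[k] A ⊗[k] C) (ψinv : A ⊗[k] C →ₗ[k] C ⊗[k] A)
    (ρ : A →ₗ[k] A ⊗[k] C)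
    (hext : IsEntwinedExtension ψ ψinv ρ) :
    ∀ a b : A,
      ψinv (rTensor C (mulLeft k a) (ρ b)) =
        lTensor C (mulRight k b) (leftCoact ψinv ρ a) := by
  intro a b
  have hρb : ρ b = entRHS ψ (ρ 1 ⊗ₜ b) := by
    rw [← hext.mul_coact, one_mul]
  have hlam : leftCoact ψinv ρ a = ψinv (rTensor C (mulLeft k a) (ρ 1)) := by
    simp [leftCoact, aux_mulLeft]
  rw [hρb, commute_lemma, ← hext.right_inv (rTensor C (mulLeft k a) (ρ 1)),
    key_lemma ψ ψinv hext.entwining hext.left_inv, hlam]
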